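/- arXiv:2205.05000 — 3 statements merged into one kernel-verified Lean document; each statement's English description precedes it below -/
import Mathlib

section
/- For all M, N ∈ M_{n_a}, the matrix representation Ĝ of the Galerkin projection QGQ of the adoption generator G built from the first-order rate functions, with entries Ĝ_{NM} = ⟨Φ_M, G Φ_N⟩ / ⟨Φ_N, 𝟙⟩, is given by: Ĝ_{NM} = γ_{ij}^{(k)} N_i^{(k)} if M = N + E_j^{(k)} − E_i^{(k)} for some statuses i ≠ j and subset index k; Ĝ_{NN} = −∑_{i,j=1}^{n_s} ∑_{k=1}^{m} γ_{ij}^{(k)} N_i^{(k)}; and Ĝ_{NM} = 0 in all other cases. -/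
/-!
On `posSet Xdom n_a` every position vector lies in exactly one box `∏_α A_{κ α}`, `κ` a cell
assignment, and on that box `Φ_N(X, S)` is the indicator of `occupation S κ = N`, where
`occupation S κ = ∑_α E_{s_α}^{(κ α)}`. Hence on each box `Φ_M · GΦ_N` is a combination of the
functions `γ_ij(x_α)` with coefficients depending only on `(S, κ)`, and integrating over the box
replaces `γ_ij(x_α)` by `γ_ij^{(κ α)}` times the volume of the box. Both inner products thus
become sums over configurations `(S, κ)` weighted by box volumes. For `M = N` the coefficients
add up to `-∑ γ_ij^{(k)} N_i^{(k)}` on every configuration of occupation `N`. For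
`M = N + E_j^{(k)} - E_i^{(k)}` only the agents of status `j` in cell `k` contribute, giving
`γ_ij^{(k)} M_j^{(k)}` per configuration of occupation `M`; switching such an agent to status `i`
is a bijection showing `M_j^{(k)} Z(M) = N_i^{(k)} Z(N)` for the weighted counts `Z`. In all other
cases every coefficient vanishes.
-/

open MeasureTheory Finset Function

namespace ABMFormal

abbrev E (d : ℕ) : Type := EuclideanSpace ℝ (Fin d)
abbrev FS (d n_s n_a : ℕ) : Type := (Fin n_a → E d) → (Fin n_a → Fin n_s) → ℝ

noncomputable def occ {d m n_s n_a : ℕ} (A : Fin m → Set (E d)) (X : Fin n_a → E d)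
    (S : Fin n_a → Fin n_s) (i : Fin n_s) (k : Fin m) : ℕ :=
  Set.ncard {α : Fin n_a | X α ∈ A k ∧ S α = i}

noncomputable def Phi {d m n_s n_a : ℕ} (A : Fin m → Set (E d)) (N : Fin n_s → Fin m → ℤ)
    (X : Fin n_a → E d) (S : Fin n_a → Fin n_s) : ℝ :=
  if ∀ i k, ((occ A X S i k : ℕ) : ℤ) = N i k then 1 else 0

noncomputable def Mset (n_s m n_a : ℕ) : Finset (Fin n_s → Fin m → ℤ) :=
  ((Finset.univ : Finset (Fin n_s → Fin m → Fin (n_a + 1))).image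
      fun f i k => ((f i k : ℕ) : ℤ)).filter
    fun N => (∑ i, ∑ k, N i k) = (n_a : ℤ)

def posSet {d : ℕ} (Xdom : Set (E d)) (n_a : ℕ) : Set (Fin n_a → E d) :=
  Set.univ.pi fun _ => Xdom

noncomputable def ip {d n_s n_a : ℕ} (Xdom : Set (E d)) (f g : FS d n_s n_a) : ℝ :=
  (((volume Xdom).toReal * (n_s : ℝ)) ^ n_a)⁻¹ *
    ∑ S : Fin n_a → Fin n_s, ∫ X in posSet Xdom n_a, f X S * g X S

def one (d n_s n_a : ℕ) : FS d n_s n_a := fun _ _ => 1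

def Emat {n_s m : ℕ} (i : Fin n_s) (k : Fin m) : Fin n_s → Fin m → ℤ :=
  fun i' k' => if i' = i ∧ k' = k then 1 else 0

def deltaS {n_s : ℕ} (i s : Fin n_s) : ℝ := if s = i then 1 else 0

noncomputable def deltaA {d : ℕ} (A : Set (E d)) (x : E d) : ℝ :=
  A.indicator (fun _ => (1 : ℝ)) x

noncomputable def dr {d : ℕ} (r : ℝ) (x y : E d) : ℝ := if dist x y ≤ r then 1 else 0

/-- Transition rates `λ_i^{(kl)} = (∫_{A_l} ∫_{A_k} ℓ_i(x,y) dy dx) / μ(A_k)`. -/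
noncomputable def lam {d m n_s : ℕ} (A : Fin m → Set (E d)) (K : Fin n_s → E d → E d → ℝ)
    (i : Fin n_s) (k l : Fin m) : ℝ :=
  (∫ x in A l, ∫ y in A k, K i x y) / (volume (A k)).toReal

/-- The movement generator `(L p)(X, S) = ∑_α ∫_X ℓ_{s_α}(x_α, y) p(X^{α→y}, S) dy`. -/
noncomputable def Lop {d n_s n_a : ℕ} (Xdom : Set (E d)) (K : Fin n_s → E d → E d → ℝ)
    (p : FS d n_s n_a) : FS d n_s n_a :=
  fun X S => ∑ α, ∫ y in Xdom, K (S α) (X α) y * p (Function.update X α y) S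

/-- `γ_{ij}^{(k)} = (∫_{A_k} γ_{ij}(x) dx) / μ(A_k)`. -/
noncomputable def gammaK {d m n_s : ℕ} (A : Fin m → Set (E d)) (γ : Fin n_s → Fin n_s → E d → ℝ)
    (i j : Fin n_s) (k : Fin m) : ℝ :=
  (∫ x in A k, γ i j x) / (volume (A k)).toReal

/-- First-order adoption rate function `f_{ij}^{(α)}(X,S) = δ_i(s_α) γ_{ij}(x_α)`. -/
noncomputable def fFirst {d n_s n_a : ℕ} (γ : Fin n_s → Fin n_s → E d → ℝ) (i j : Fin n_s)
    (α : Fin n_a) (X : Fin n_a → E d) (S : Fin n_a → Fin n_s) : ℝ :=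
  deltaS i (S α) * γ i j (X α)

/-- Outflow part `G₁ p = (∑_{i,j,α} f_{ij}^{(α)}) p` of the first-order adoption generator. -/
noncomputable def G1First {d n_s n_a : ℕ} (γ : Fin n_s → Fin n_s → E d → ℝ)
    (p : FS d n_s n_a) : FS d n_s n_a :=
  fun X S => (∑ i, ∑ j, ∑ α, fFirst γ i j α X S) * p X S

/-- Inflow part `G₂ p (X,S) = ∑_{i,j,α} f_{ij}^{(α)}(X, S + i e_α − j e_α) p(X, S + i e_α − j e_α)`
of the first-order adoption generator.  Since in coordinatewise integer arithmetic
`δ_i(s_α + i − j) = δ_j(s_α)`, and then `S + i e_α − j e_α = Function.update S α i` lies in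
`S^{n_a}`, while all other summands vanish by the extension-by-zero convention, the term
equals `∑_{i,j,α} δ_j(s_α) γ_{ij}(x_α) p(X, update S α i)`. -/
noncomputable def G2First {d n_s n_a : ℕ} (γ : Fin n_s → Fin n_s → E d → ℝ)
    (p : FS d n_s n_a) : FS d n_s n_a :=
  fun X S => ∑ i, ∑ j, ∑ α, deltaS j (S α) * γ i j (X α) * p X (Function.update S α i)

/-- The first-order adoption generator `G = −G₁ + G₂`. -/
noncomputable def GopFirst {d n_s n_a : ℕ} (γ : Fin n_s → Fin n_s → E d → ℝ)
    (p : FS d n_s n_a) : FS d n_s n_a :=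
  fun X S => -(G1First γ p X S) + G2First γ p X S

/-- Second-order adoption rate function
`f_{ij}^{(α)}(X,S) = δ_i(s_α) ∑_{β ≠ α} δ_j(s_β) c_{ij} d_r(x_α, x_β)`. -/
noncomputable def fSecond {d n_s n_a : ℕ} (c : Fin n_s → Fin n_s → ℝ) (r : ℝ)
    (i j : Fin n_s) (α : Fin n_a) (X : Fin n_a → E d) (S : Fin n_a → Fin n_s) : ℝ :=
  deltaS i (S α) * ∑ β ∈ Finset.univ.erase α, deltaS j (S β) * (c i j * dr r (X α) (X β))

/-- Outflow part `G₁ p = (∑_{i,j,α} f_{ij}^{(α)}) p` of the second-order adoption generator. -/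
noncomputable def G1Second {d n_s n_a : ℕ} (c : Fin n_s → Fin n_s → ℝ) (r : ℝ)
    (p : FS d n_s n_a) : FS d n_s n_a :=
  fun X S => (∑ i, ∑ j, ∑ α, fSecond c r i j α X S) * p X S

/-- Inflow part of the second-order adoption generator, the term
`∑_{i,j,α} f_{ij}^{(α)}(X, S + i e_α − j e_α) p(X, S + i e_α − j e_α)`; as in the
first-order case the only non-vanishing summands are those with `s_α = j`, giving
`∑_{i,j,α} δ_j(s_α) (∑_{β ≠ α} δ_j(s_β) c_{ij} d_r(x_α,x_β)) p(X, update S α i)`. -/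
noncomputable def G2Second {d n_s n_a : ℕ} (c : Fin n_s → Fin n_s → ℝ) (r : ℝ)
    (p : FS d n_s n_a) : FS d n_s n_a :=
  fun X S => ∑ i, ∑ j, ∑ α, deltaS j (S α) *
    (∑ β ∈ Finset.univ.erase α, deltaS j (S β) * (c i j * dr r (X α) (X β))) *
    p X (Function.update S α i)

/-- The second-order adoption generator `G = −G₁ + G₂`. -/
noncomputable def GopSecond {d n_s n_a : ℕ} (c : Fin n_s → Fin n_s → ℝ) (r : ℝ)
    (p : FS d n_s n_a) : FS d n_s n_a :=
  fun X S => -(G1Second c r p X S) + G2Second c r p X S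

/-- `b_{kl} = (∫_{A_k} ∫_{A_l} d_r(x₁,x₂) dx₂ dx₁)/(μ(A_k) μ(A_l))`. -/
noncomputable def bOf {d m : ℕ} (A : Fin m → Set (E d)) (r : ℝ) (k l : Fin m) : ℝ :=
  (∫ x in A k, ∫ y in A l, dr r x y) / ((volume (A k)).toReal * (volume (A l)).toReal)

/-- The normalized ansatz functions `Φ̂_N = Φ_N / ⟨Φ_N, 𝟙⟩`. -/
noncomputable def Phihat {d m n_s n_a : ℕ} (Xdom : Set (E d)) (A : Fin m → Set (E d))
    (N : Fin n_s → Fin m → ℤ) : FS d n_s n_a :=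
  fun X S => Phi A N X S / ip Xdom (Phi (n_a := n_a) A N) (one d n_s n_a)

/-- The Galerkin projection `Q v = ∑_{N ∈ M_{n_a}} (⟨Φ_N, v⟩/⟨Φ_N, 𝟙⟩) Φ_N`. -/
noncomputable def Qproj {d m n_s n_a : ℕ} (Xdom : Set (E d)) (A : Fin m → Set (E d))
    (v : FS d n_s n_a) : FS d n_s n_a :=
  fun X S => ∑ N ∈ Mset n_s m n_a,
    (ip Xdom (Phi (n_a := n_a) A N) v / ip Xdom (Phi (n_a := n_a) A N) (one d n_s n_a)) *
      Phi A N X S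

/-- The matrix representation `Ĥ_{NM} = ⟨Φ_M, H Φ_N⟩ / ⟨Φ_N, 𝟙⟩` of a projected operator. -/
noncomputable def Hhat {d m n_s n_a : ℕ} (Xdom : Set (E d)) (A : Fin m → Set (E d))
    (H : FS d n_s n_a →ₗ[ℝ] FS d n_s n_a) (N M : Fin n_s → Fin m → ℤ) : ℝ :=
  ip Xdom (Phi (n_a := n_a) A M) (H (Phi A N)) / ip Xdom (Phi (n_a := n_a) A N) (one d n_s n_a)

section Occupation

variable {n_s m n_a : ℕ}

def occupation (S : Fin n_a → Fin n_s) (κ : Fin n_a → Fin m) : Fin n_s → Fin m → ℤ :=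
  ∑ α, Emat (S α) (κ α)

lemma occupation_apply (S : Fin n_a → Fin n_s) (κ : Fin n_a → Fin m) (i : Fin n_s)
    (k : Fin m) :
    occupation S κ i k = #{α | S α = i ∧ κ α = k} := by
  simp [occupation, Emat, Finset.sum_apply, eq_comm]

lemma occupation_update (S : Fin n_a → Fin n_s) (κ : Fin n_a → Fin m) (α : Fin n_a)
    (i : Fin n_s) :
    occupation (update S α i) κ = occupation S κ + Emat i (κ α) - Emat (S α) (κ α) := by
  simp only [occupation, ← add_sum_erase _ _ (mem_univ α), update_self]
  rw [sum_congr rfl fun β hβ => by rw [update_of_ne (ne_of_mem_erase hβ)]]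
  abel

lemma Emat_injective_left (k : Fin m) : Injective fun i : Fin n_s => Emat i k := by
  intro i j h
  simpa [Emat] using congrFun (congrFun h i) k

lemma Emat_sub_Emat_eq_iff {i j i' j' : Fin n_s} {k k' : Fin m} (hij : i ≠ j) :
    Emat j k - Emat i k = Emat j' k' - Emat i' k' ↔ i = i' ∧ j = j' ∧ k = k' := by
  constructor
  · intro h
    have hj := congrFun (congrFun h j) k
    have hi := congrFun (congrFun h i) k
    simp only [Pi.sub_apply, Emat] at hj hi
    grind
  · rintro ⟨rfl, rfl, rfl⟩
    rfl

lemma sum_ite_status_eq_sum_occupation (S : Fin n_a → Fin n_s) (κ : Fin n_a → Fin m)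
    (i : Fin n_s) (f : Fin m → ℝ) :
    ∑ α, (if S α = i then f (κ α) else 0) = ∑ k, f k * occupation S κ i k := by
  simp only [occupation_apply, card_filter]
  push_cast
  simp only [mul_sum, mul_ite, mul_one, mul_zero]
  rw [sum_comm]
  refine sum_congr rfl fun α _ => ?_
  split_ifs with h <;> simp [h]

end Occupation

section Weights

variable {n_s m n_a : ℕ}

def occupationWeight (w : (Fin n_a → Fin m) → ℝ) (N : Fin n_s → Fin m → ℤ) : ℝ :=
  ∑ S : Fin n_a → Fin n_s, ∑ κ, if occupation S κ = N then w κ else 0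

lemma sum_ite_occupation_eq_mul_occupationWeight (w : (Fin n_a → Fin m) → ℝ)
    {N : Fin n_s → Fin m → ℤ} {f : (Fin n_a → Fin n_s) → (Fin n_a → Fin m) → ℝ} {v : ℝ}
    (hf : ∀ S κ, occupation S κ = N → f S κ = v) :
    ∑ S, ∑ κ, (if occupation S κ = N then w κ * f S κ else 0) = v * occupationWeight w N := by
  simp only [occupationWeight, mul_sum, mul_ite, mul_zero]
  refine sum_congr rfl fun S _ => sum_congr rfl fun κ _ => ?_
  split_ifs with h
  · rw [hf S κ h, mul_comm]
  · rfl

lemma mul_occupationWeight_eq_sum (w : (Fin n_a → Fin m) → ℝ) (N : Fin n_s → Fin m → ℤ)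
    (i : Fin n_s) (k : Fin m) :
    (N i k : ℝ) * occupationWeight w N
      = ∑ κ, ∑ α, ∑ S, if occupation S κ = N ∧ S α = i ∧ κ α = k then w κ else 0 := by
  simp only [occupationWeight, mul_sum]
  rw [sum_comm]
  refine sum_congr rfl fun κ _ => ?_
  rw [sum_comm]
  refine sum_congr rfl fun S _ => ?_
  split_ifs with h
  · simp only [h, true_and]
    rw [← h, occupation_apply, sum_ite, sum_const_zero, add_zero, sum_const, nsmul_eq_mul]
    norm_cast
  · simp [h]

/-- Changing the status of one agent of cell `k` from `j` to `i` matches the configurations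
counted on the two sides. -/
lemma mul_occupationWeight_of_transition (w : (Fin n_a → Fin m) → ℝ)
    {M N : Fin n_s → Fin m → ℤ} {i j : Fin n_s} {k : Fin m}
    (hM : M = N + Emat j k - Emat i k) :
    (M j k : ℝ) * occupationWeight w M = (N i k : ℝ) * occupationWeight w N := by
  rw [mul_occupationWeight_eq_sum, mul_occupationWeight_eq_sum]
  refine sum_congr rfl fun κ _ => sum_congr rfl fun α _ => ?_
  have hτ : Involutive fun S : Fin n_a → Fin n_s => update S α (Equiv.swap i j (S α)) :=
    fun S => by simp
  refine Fintype.sum_equiv hτ.toPerm _ _ fun S => ?_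
  simp only [Involutive.coe_toPerm, update_self, Equiv.swap_apply_eq_iff, Equiv.swap_apply_left]
  by_cases hS : S α = j
  · rw [hS, Equiv.swap_apply_right, occupation_update, hS, hM]
    by_cases hκ : κ α = k
    · simp only [hκ, and_true]
      congr 1
      exact propext ⟨fun h => by rw [h]; abel, fun h => by rw [← h]; abel⟩
    · simp [hκ]
  · simp [hS]

end Weights

section TransitionCoeff

variable {n_s m n_a : ℕ}

lemma add_Emat_sub_Emat_eq_iff {N : Fin n_s → Fin m → ℤ} {i j i' j' : Fin n_s} {k k' : Fin m}
    (hij : i ≠ j) :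
    N + Emat j k - Emat i k = N + Emat j' k' - Emat i' k' ↔ i = i' ∧ j = j' ∧ k = k' := by
  rw [add_sub_assoc, add_sub_assoc, add_right_inj, Emat_sub_Emat_eq_iff hij]

/-- The coefficient of `γ_{ij}(x_α)` in `Φ_M · GΦ_N` at a configuration where agent `α` has
status `s` and lies in `A_k` (see `Phi_mul_GopFirst_Phi_eqOn_box`). -/
def transitionCoeff (M N : Fin n_s → Fin m → ℤ) (s : Fin n_s) (k : Fin m) (i j : Fin n_s) : ℝ :=
  (if s = j ∧ M = N + Emat j k - Emat i k then 1 else 0) - (if s = i ∧ M = N then 1 else 0)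

lemma mul_transitionCoeff_self {g : Fin n_s → Fin n_s → Fin m → ℝ} (hg : ∀ i k, g i i k = 0)
    (N : Fin n_s → Fin m → ℤ) (s : Fin n_s) (k : Fin m) (i j : Fin n_s) :
    g i j k * transitionCoeff N N s k i j = -(if s = i then g i j k else 0) := by
  by_cases hij : i = j
  · subst hij
    by_cases hs : s = i <;> simp [transitionCoeff, hs, hg]
  · have hN : N ≠ N + Emat j k - Emat i k := by
      intro h
      have : Emat j k = Emat i k := by simpa [add_sub_assoc, sub_eq_zero] using h
      exact hij (Emat_injective_left k this).symm
    simp [transitionCoeff, hN]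

lemma sum_transitionCoeff_self {g : Fin n_s → Fin n_s → Fin m → ℝ} (hg : ∀ i k, g i i k = 0)
    (N : Fin n_s → Fin m → ℤ) (S : Fin n_a → Fin n_s) (κ : Fin n_a → Fin m) :
    ∑ i, ∑ j, ∑ α, g i j (κ α) * transitionCoeff N N (S α) (κ α) i j
      = -∑ i, ∑ j, ∑ k, g i j k * occupation S κ i k := by
  simp only [mul_transitionCoeff_self hg, sum_neg_distrib, sum_ite_status_eq_sum_occupation]

lemma sum_transitionCoeff_of_transition {M N : Fin n_s → Fin m → ℤ} {i₀ j₀ : Fin n_s}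
    {k₀ : Fin m} (hij : i₀ ≠ j₀) (hM : M = N + Emat j₀ k₀ - Emat i₀ k₀)
    (g : Fin n_s → Fin n_s → Fin m → ℝ) (S : Fin n_a → Fin n_s) (κ : Fin n_a → Fin m) :
    ∑ i, ∑ j, ∑ α, g i j (κ α) * transitionCoeff M N (S α) (κ α) i j
      = g i₀ j₀ k₀ * occupation S κ j₀ k₀ := by
  have hMN : M ≠ N := by
    rintro rfl
    have := (add_Emat_sub_Emat_eq_iff hij (N := M) (i' := j₀) (j' := j₀) (k' := k₀)).1
      (by rw [← hM]; abel)
    exact hij this.1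
  have hcoeff : ∀ s k i j, transitionCoeff M N s k i j
      = if i = i₀ ∧ j = j₀ ∧ s = j₀ ∧ k = k₀ then 1 else 0 := by
    intro s k i j
    simp only [transitionCoeff, hMN, and_false, if_false, sub_zero]
    simp only [hM, add_Emat_sub_Emat_eq_iff hij]
    exact if_congr (by aesop) rfl rfl
  simp only [hcoeff, mul_ite, mul_one, mul_zero, ite_and, sum_ite_irrel, sum_const_zero,
    sum_ite_eq', mem_univ, if_true]
  rw [occupation_apply, card_filter]
  push_cast
  rw [mul_sum]
  refine sum_congr rfl fun α _ => ?_
  by_cases hs : S α = j₀ <;> by_cases hk : κ α = k₀ <;> simp [hs, hk]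

lemma transitionCoeff_eq_zero {M N : Fin n_s → Fin m → ℤ} (hMN : M ≠ N)
    (hno : ¬∃ (i j : Fin n_s) (k : Fin m), i ≠ j ∧ M = N + Emat j k - Emat i k)
    (s : Fin n_s) (k : Fin m) (i j : Fin n_s) : transitionCoeff M N s k i j = 0 := by
  have hM : M ≠ N + Emat j k - Emat i k := by
    intro h
    by_cases hij : i = j
    · subst hij
      exact hMN (by simpa using h)
    · exact hno ⟨i, j, k, hij, h⟩
  simp [transitionCoeff, hM, hMN]

end TransitionCoeff

lemma integral_pi_comp_eval {ι Ω : Type*} [Fintype ι] [DecidableEq ι] [MeasurableSpace Ω]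
    (μ : ι → Measure Ω) [∀ i, SigmaFinite (μ i)] (i : ι) (g : Ω → ℝ) :
    ∫ x, g (x i) ∂Measure.pi μ = (∫ y, g y ∂μ i) * ∏ j ∈ univ.erase i, (μ j).real Set.univ := by
  have h := integral_fintype_prod_eq_prod (μ := μ) fun j y => if j = i then g y else 1
  simp only [prod_ite_eq', mem_univ, if_true] at h
  rw [h, ← mul_prod_erase univ _ (mem_univ i)]
  congr 1
  · simp
  · refine prod_congr rfl fun j hj => ?_
    simp [ne_of_mem_erase hj]

section Boxes

variable {d m n_a : ℕ} {A : Fin m → Set (E d)}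

def box (A : Fin m → Set (E d)) (κ : Fin n_a → Fin m) : Set (Fin n_a → E d) :=
  Set.univ.pi fun α => A (κ α)

lemma measurableSet_box (hA : ∀ k, MeasurableSet (A k)) (κ : Fin n_a → Fin m) :
    MeasurableSet (box A κ) :=
  .univ_pi fun α => hA (κ α)

lemma restrict_box (κ : Fin n_a → Fin m) :
    volume.restrict (box A κ) = Measure.pi fun α => volume.restrict (A (κ α)) := by
  rw [box, volume_pi, Measure.restrict_pi_pi]

lemma measureReal_box (κ : Fin n_a → Fin m) :
    volume.real (box A κ) = ∏ α, volume.real (A (κ α)) := by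
  simp [measureReal_def, box, volume_pi_pi, ENNReal.toReal_prod]

lemma measure_box_ne_top (hAfin : ∀ k, volume (A k) ≠ ⊤) (κ : Fin n_a → Fin m) :
    volume (box A κ) ≠ ⊤ := by
  rw [box, volume_pi_pi]
  exact ENNReal.prod_ne_top fun α _ => hAfin (κ α)

lemma setIntegral_box_comp_eval (κ : Fin n_a → Fin m) (α : Fin n_a) (g : E d → ℝ) :
    ∫ X in box A κ, g (X α)
      = (∫ x in A (κ α), g x) * ∏ β ∈ univ.erase α, volume.real (A (κ β)) := by
  rw [restrict_box, integral_pi_comp_eval]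
  simp [measureReal_def]

lemma integrableOn_box_comp_eval (hAfin : ∀ k, volume (A k) ≠ ⊤) {κ : Fin n_a → Fin m}
    {α : Fin n_a} {g : E d → ℝ} (hg : IntegrableOn g (A (κ α))) :
    IntegrableOn (fun X => g (X α)) (box A κ) := by
  have : ∀ β, IsFiniteMeasure (volume.restrict (A (κ β))) := fun β =>
    isFiniteMeasure_restrict.2 (hAfin _)
  rw [IntegrableOn, restrict_box]
  exact integrable_comp_eval hg

lemma iUnion_box {Xdom : Set (E d)} (hAcover : (⋃ k, A k) = Xdom) :
    ⋃ κ : Fin n_a → Fin m, box A κ = posSet Xdom n_a := by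
  rw [posSet, ← hAcover, ← Set.iUnion_univ_pi]
  rfl

lemma pairwise_disjoint_box (hAdisj : Pairwise (Disjoint on A)) :
    Pairwise (Disjoint on box (n_a := n_a) A) := by
  intro κ κ' hκ
  obtain ⟨α, hα⟩ := Function.ne_iff.1 hκ
  exact Set.disjoint_univ_pi.2 ⟨α, hAdisj hα⟩

end Boxes

section Ansatz

variable {d m n_s n_a : ℕ} {A : Fin m → Set (E d)}

lemma Phi_of_mem_box (hAdisj : Pairwise (Disjoint on A)) {κ : Fin n_a → Fin m}
    {X : Fin n_a → E d} (hX : X ∈ box A κ) (N : Fin n_s → Fin m → ℤ) (S : Fin n_a → Fin n_s) :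
    Phi A N X S = if occupation S κ = N then 1 else 0 := by
  have hmem : ∀ α k, X α ∈ A k ↔ κ α = k := fun α k =>
    ⟨fun h => by_contra fun hne => Set.disjoint_left.1 (hAdisj hne) (hX α trivial) h,
      fun h => h ▸ hX α trivial⟩
  have hocc : ∀ i k, (occ A X S i k : ℤ) = occupation S κ i k := by
    intro i k
    rw [occupation_apply, occ, ← Set.ncard_coe_finset]
    congr 2
    ext α
    simp [hmem, and_comm]
  simp only [Phi, hocc, ← funext_iff]

lemma Phi_mul_GopFirst_Phi_eqOn_box (hAdisj : Pairwise (Disjoint on A))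
    (γ : Fin n_s → Fin n_s → E d → ℝ) (M N : Fin n_s → Fin m → ℤ) (S : Fin n_a → Fin n_s)
    (κ : Fin n_a → Fin m) :
    Set.EqOn (fun X => Phi A M X S * GopFirst γ (Phi A N) X S)
      (fun X => if occupation S κ = M then
          ∑ i, ∑ j, ∑ α, γ i j (X α) * transitionCoeff M N (S α) (κ α) i j
        else 0) (box A κ) := by
  intro X hX
  dsimp only
  rw [Phi_of_mem_box hAdisj hX]
  split_ifs with hM
  · simp only [one_mul, GopFirst, G1First, G2First, fFirst, Phi_of_mem_box hAdisj hX,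
      occupation_update, hM, sum_mul, ← sum_neg_distrib, ← sum_add_distrib]
    refine sum_congr rfl fun i _ => sum_congr rfl fun j _ => sum_congr rfl fun α _ => ?_
    have hiff : M + Emat i (κ α) - Emat j (κ α) = N ↔ M = N + Emat j (κ α) - Emat i (κ α) :=
      ⟨fun h => by rw [← h]; abel, fun h => by rw [h]; abel⟩
    rcases eq_or_ne (S α) j with hj | hj
    · rw [hj]
      simp only [deltaS, transitionCoeff, hiff, ite_and, if_true]
      split_ifs <;> ring
    · simp only [deltaS, transitionCoeff, hj, ite_and, if_false]
      split_ifs <;> ring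
  · rw [zero_mul]

end Ansatz

section InnerProducts

variable {d m n_s n_a : ℕ} {Xdom : Set (E d)} {A : Fin m → Set (E d)}

lemma setIntegral_box_gammaK (hApos : ∀ k, 0 < volume (A k)) (hAfin : ∀ k, volume (A k) ≠ ⊤)
    (γ : Fin n_s → Fin n_s → E d → ℝ) (i j : Fin n_s) (κ : Fin n_a → Fin m) (α : Fin n_a) :
    ∫ X in box A κ, γ i j (X α) = gammaK A γ i j (κ α) * volume.real (box A κ) := by
  have hα : volume.real (A (κ α)) ≠ 0 := ENNReal.toReal_ne_zero.2 ⟨(hApos _).ne', hAfin _⟩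
  rw [setIntegral_box_comp_eval, measureReal_box, ← mul_prod_erase univ _ (mem_univ α), gammaK,
    ← measureReal_def, ← mul_assoc, div_mul_cancel₀ _ hα]

lemma ip_eq_sum_setIntegral_box (hAmeas : ∀ k, MeasurableSet (A k))
    (hAdisj : Pairwise (Disjoint on A)) (hAcover : (⋃ k, A k) = Xdom) {f g : FS d n_s n_a}
    (hfg : ∀ S κ, IntegrableOn (fun X => f X S * g X S) (box A κ)) :
    ip Xdom f g = (((volume Xdom).toReal * n_s) ^ n_a)⁻¹ *
      ∑ S, ∑ κ, ∫ X in box A κ, f X S * g X S := by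
  rw [ip, ← iUnion_box hAcover]
  congr 1
  exact sum_congr rfl fun S _ =>
    integral_iUnion_fintype (measurableSet_box hAmeas) (pairwise_disjoint_box hAdisj) (hfg S)

lemma ip_Phi_one (hAmeas : ∀ k, MeasurableSet (A k)) (hAdisj : Pairwise (Disjoint on A))
    (hAcover : (⋃ k, A k) = Xdom) (hAfin : ∀ k, volume (A k) ≠ ⊤) (N : Fin n_s → Fin m → ℤ) :
    ip Xdom (Phi (n_a := n_a) A N) (one d n_s n_a) = (((volume Xdom).toReal * n_s) ^ n_a)⁻¹ *
      occupationWeight (fun κ : Fin n_a → Fin m => volume.real (box A κ)) N := by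
  have hEq : ∀ S κ, Set.EqOn (fun X => Phi A N X S * one d n_s n_a X S)
      (fun _ => if occupation S κ = N then 1 else 0) (box A κ) := fun S κ X hX => by
    simp only [one, mul_one, Phi_of_mem_box hAdisj hX]
  rw [ip_eq_sum_setIntegral_box hAmeas hAdisj hAcover fun S κ =>
    ((integrableOn_const (measure_box_ne_top hAfin κ)).congr_fun (hEq S κ).symm
      (measurableSet_box hAmeas κ))]
  congr 1
  refine sum_congr rfl fun S _ => sum_congr rfl fun κ _ => ?_
  rw [setIntegral_congr_fun (measurableSet_box hAmeas κ) (hEq S κ), setIntegral_const,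
    smul_eq_mul, mul_ite, mul_one, mul_zero]

lemma ip_Phi_GopFirst_Phi (hAmeas : ∀ k, MeasurableSet (A k))
    (hAdisj : Pairwise (Disjoint on A)) (hAcover : (⋃ k, A k) = Xdom)
    (hApos : ∀ k, 0 < volume (A k)) (hAfin : ∀ k, volume (A k) ≠ ⊤)
    {γ : Fin n_s → Fin n_s → E d → ℝ} (hγ : ∀ i j k, IntegrableOn (γ i j) (A k))
    (M N : Fin n_s → Fin m → ℤ) :
    ip Xdom (Phi (n_a := n_a) A M) (GopFirst γ (Phi A N))
      = (((volume Xdom).toReal * n_s) ^ n_a)⁻¹ * ∑ S : Fin n_a → Fin n_s, ∑ κ : Fin n_a → Fin m,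
          if occupation S κ = M then
            volume.real (box A κ) *
              ∑ i, ∑ j, ∑ α, gammaK A γ i j (κ α) * transitionCoeff M N (S α) (κ α) i j
          else 0 := by
  have hint : ∀ (S : Fin n_a → Fin n_s) (κ : Fin n_a → Fin m) i j α,
      IntegrableOn (fun X => γ i j (X α) * transitionCoeff M N (S α) (κ α) i j) (box A κ) :=
    fun S κ i j α => (integrableOn_box_comp_eval hAfin (hγ i j _)).mul_const _
  have hEq := fun (S : Fin n_a → Fin n_s) (κ : Fin n_a → Fin m) =>
    (Phi_mul_GopFirst_Phi_eqOn_box hAdisj γ M N S κ).symm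
  rw [ip_eq_sum_setIntegral_box hAmeas hAdisj hAcover fun S κ => by
    refine IntegrableOn.congr_fun ?_ (hEq S κ) (measurableSet_box hAmeas κ)
    split_ifs
    exacts [integrable_finsetSum _ fun i _ => integrable_finsetSum _ fun j _ =>
      integrable_finsetSum _ fun α _ => hint S κ i j α, integrableOn_zero]]
  congr 1
  refine sum_congr rfl fun S _ => sum_congr rfl fun κ _ => ?_
  rw [← setIntegral_congr_fun (measurableSet_box hAmeas κ) (hEq S κ)]
  split_ifs
  · simp only [mul_sum]
    rw [integral_finsetSum _ fun i _ => integrable_finsetSum _ fun j _ =>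
      integrable_finsetSum _ fun α _ => hint S κ i j α]
    refine sum_congr rfl fun i _ => ?_
    rw [integral_finsetSum _ fun j _ => integrable_finsetSum _ fun α _ => hint S κ i j α]
    refine sum_congr rfl fun j _ => ?_
    rw [integral_finsetSum _ fun α _ => hint S κ i j α]
    refine sum_congr rfl fun α _ => ?_
    rw [integral_mul_const, setIntegral_box_gammaK hApos hAfin]
    ring
  · exact integral_zero _ _

end InnerProducts

lemma exists_occupation_eq {n_s m n_a : ℕ} {N : Fin n_s → Fin m → ℤ}
    (hN : N ∈ Mset n_s m n_a) : ∃ (S : Fin n_a → Fin n_s) (κ : Fin n_a → Fin m),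
      occupation S κ = N := by
  obtain ⟨⟨f, -, rfl⟩, hsum⟩ := by simpa only [Mset, mem_filter, mem_image] using hN
  simp only at hsum
  let c : Fin n_s × Fin m → ℕ := fun t => f t.1 t.2
  have hcard : Fintype.card (Fin n_a) = Fintype.card ((t : Fin n_s × Fin m) × Fin (c t)) := by
    simp only [Fintype.card_fin, Fintype.card_sigma, c, Fintype.sum_prod_type]
    exact_mod_cast hsum.symm
  let e := Fintype.equivOfCardEq hcard
  refine ⟨fun α => (e α).1.1, fun α => (e α).1.2, ?_⟩
  rw [occupation, Fintype.sum_equiv e _ (fun p => Emat p.1.1 p.1.2) fun α => rfl,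
    Fintype.sum_sigma]
  ext i k
  simp [Emat, Finset.sum_apply, c, Fintype.sum_prod_type, ite_and]

lemma occupationWeight_pos {d m n_s n_a : ℕ} {A : Fin m → Set (E d)}
    (hApos : ∀ k, 0 < volume (A k)) (hAfin : ∀ k, volume (A k) ≠ ⊤)
    {N : Fin n_s → Fin m → ℤ} (hN : N ∈ Mset n_s m n_a) :
    0 < occupationWeight (fun κ : Fin n_a → Fin m => volume.real (box A κ)) N := by
  have hw : ∀ κ : Fin n_a → Fin m, 0 < volume.real (box A κ) := fun κ => by
    rw [measureReal_box]
    exact prod_pos fun α _ => ENNReal.toReal_pos (hApos _).ne' (hAfin _)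
  obtain ⟨S, κ, h⟩ := exists_occupation_eq hN
  refine sum_pos' (fun S _ => sum_nonneg fun κ _ => ?_) ⟨S, mem_univ S, ?_⟩
  · split_ifs
    exacts [(hw κ).le, le_rfl]
  · exact sum_pos' (fun κ _ => by split_ifs; exacts [(hw κ).le, le_rfl])
      ⟨κ, mem_univ κ, by rw [if_pos h]; exact hw κ⟩

theorem statement9_general (d m n_s n_a : ℕ) (hns : 1 ≤ n_s)
    (Xdom : Set (E d)) (hXcomp : IsCompact Xdom) (hXpos : 0 < volume Xdom)
    (A : Fin m → Set (E d)) (hAmeas : ∀ k, MeasurableSet (A k))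
    (hAdisj : Pairwise (Disjoint on A)) (hApos : ∀ k, 0 < volume (A k))
    (hAcover : (⋃ k, A k) = Xdom)
    (γ : Fin n_s → Fin n_s → E d → ℝ)
    (hγdiag : ∀ i x, γ i i x = 0)
    (hγint : ∀ i j, IntegrableOn (γ i j) Xdom)
    (N M : Fin n_s → Fin m → ℤ)
    (hN : N ∈ Mset n_s m n_a) :
    (∀ (i j : Fin n_s) (k : Fin m), i ≠ j → M = N + Emat j k - Emat i k →
      ip Xdom (Phi (n_a := n_a) A M) (GopFirst γ (Phi A N))
          / ip Xdom (Phi (n_a := n_a) A N) (one d n_s n_a)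
        = gammaK A γ i j k * (N i k : ℝ)) ∧
    (ip Xdom (Phi (n_a := n_a) A N) (GopFirst γ (Phi A N))
          / ip Xdom (Phi (n_a := n_a) A N) (one d n_s n_a)
        = -∑ i : Fin n_s, ∑ j : Fin n_s, ∑ k : Fin m, gammaK A γ i j k * (N i k : ℝ)) ∧
    ((M ≠ N ∧ ¬∃ (i j : Fin n_s) (k : Fin m), i ≠ j ∧ M = N + Emat j k - Emat i k) →
      ip Xdom (Phi (n_a := n_a) A M) (GopFirst γ (Phi A N))
          / ip Xdom (Phi (n_a := n_a) A N) (one d n_s n_a) = 0) := by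
  have hXfin : volume Xdom ≠ ⊤ := hXcomp.measure_lt_top.ne
  have hAsub : ∀ k, A k ⊆ Xdom := fun k => hAcover ▸ Set.subset_iUnion A k
  have hAfin : ∀ k, volume (A k) ≠ ⊤ := fun k => measure_ne_top_of_subset (hAsub k) hXfin
  have hγ : ∀ i j k, IntegrableOn (γ i j) (A k) := fun i j k => (hγint i j).mono_set (hAsub k)
  have hγK : ∀ i k, gammaK A γ i i k = 0 := fun i k => by simp [gammaK, hγdiag]
  set w := fun κ : Fin n_a → Fin m => volume.real (box A κ)
  have hc : (((volume Xdom).toReal * n_s) ^ n_a)⁻¹ ≠ 0 :=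
    inv_ne_zero <| pow_ne_zero _ <| mul_ne_zero (ENNReal.toReal_ne_zero.2 ⟨hXpos.ne', hXfin⟩)
      (Nat.cast_ne_zero.2 (Nat.one_le_iff_ne_zero.1 hns))
  have hZ : occupationWeight w N ≠ 0 := (occupationWeight_pos hApos hAfin hN).ne'
  have hratio : ∀ (M : Fin n_s → Fin m → ℤ) (v : ℝ), (∑ S : Fin n_a → Fin n_s, ∑ κ,
      if occupation S κ = M then
        w κ * ∑ i, ∑ j, ∑ α, gammaK A γ i j (κ α) * transitionCoeff M N (S α) (κ α) i j
      else 0) = v * occupationWeight w N →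
      ip Xdom (Phi (n_a := n_a) A M) (GopFirst γ (Phi A N))
        / ip Xdom (Phi (n_a := n_a) A N) (one d n_s n_a) = v := fun M v hv => by
    rw [ip_Phi_GopFirst_Phi hAmeas hAdisj hAcover hApos hAfin hγ, ip_Phi_one hAmeas hAdisj
      hAcover hAfin, hv, mul_div_mul_left _ _ hc, mul_div_cancel_right₀ _ hZ]
  refine ⟨fun i j k hij hM => hratio M _ ?_, hratio N _ ?_, fun ⟨hMN, hno⟩ => hratio M 0 ?_⟩
  · rw [sum_ite_occupation_eq_mul_occupationWeight w fun S κ h => by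
      rw [sum_transitionCoeff_of_transition hij hM, h], mul_assoc,
      mul_occupationWeight_of_transition w hM, mul_assoc]
  · exact sum_ite_occupation_eq_mul_occupationWeight w fun S κ h => by
      rw [sum_transitionCoeff_self hγK, h]
  · rw [sum_ite_occupation_eq_mul_occupationWeight w (v := 0) fun S κ _ => by
      simp [transitionCoeff_eq_zero hMN hno], zero_mul, zero_mul]

/-- the matrix representation `Ĝ_{NM} = ⟨Φ_M, G Φ_N⟩/⟨Φ_N, 𝟙⟩` of the
projected first-order adoption generator is: `γ_{ij}^{(k)} N_i^{(k)}` if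
`M = N + E_j^{(k)} − E_i^{(k)}` with `i ≠ j`; `−∑_{i,j} ∑_k γ_{ij}^{(k)} N_i^{(k)}` if
`M = N`; and `0` otherwise. -/
theorem statement9 (d m n_s n_a : ℕ) (hns : 1 ≤ n_s) (hna : 1 ≤ n_a)
    (Xdom : Set (E d)) (hXcomp : IsCompact Xdom) (hXpos : 0 < volume Xdom)
    (A : Fin m → Set (E d)) (hAmeas : ∀ k, MeasurableSet (A k))
    (hAdisj : Pairwise (Disjoint on A)) (hApos : ∀ k, 0 < volume (A k))
    (hAcover : (⋃ k, A k) = Xdom)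
    (γ : Fin n_s → Fin n_s → E d → ℝ)
    (hγnonneg : ∀ i j x, 0 ≤ γ i j x) (hγdiag : ∀ i x, γ i i x = 0)
    (hγint : ∀ i j, IntegrableOn (γ i j) Xdom)
    (N M : Fin n_s → Fin m → ℤ)
    (hN : N ∈ Mset n_s m n_a) (hM : M ∈ Mset n_s m n_a) :
    (∀ (i j : Fin n_s) (k : Fin m), i ≠ j → M = N + Emat j k - Emat i k →
      ip Xdom (Phi (n_a := n_a) A M) (GopFirst γ (Phi A N))
          / ip Xdom (Phi (n_a := n_a) A N) (one d n_s n_a)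
        = gammaK A γ i j k * (N i k : ℝ)) ∧
    (ip Xdom (Phi (n_a := n_a) A N) (GopFirst γ (Phi A N))
          / ip Xdom (Phi (n_a := n_a) A N) (one d n_s n_a)
        = -∑ i : Fin n_s, ∑ j : Fin n_s, ∑ k : Fin m, gammaK A γ i j k * (N i k : ℝ)) ∧
    ((M ≠ N ∧ ¬∃ (i j : Fin n_s) (k : Fin m), i ≠ j ∧ M = N + Emat j k - Emat i k) →
      ip Xdom (Phi (n_a := n_a) A M) (GopFirst γ (Phi A N))
          / ip Xdom (Phi (n_a := n_a) A N) (one d n_s n_a) = 0) :=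
  statement9_general d m n_s n_a hns Xdom hXcomp hXpos A hAmeas hAdisj hApos hAcover γ hγdiag hγint
    N M hN

end ABMFormal
end

section
/- Define (G₁ p)(X, S) = ∑_{i,j=1}^{n_s} ∑_{α=1}^{n_a} f_{ij}^{(α)}(X, S) p(X, S) with the first-order rate functions f_{ij}^{(α)}(X, S) = δ_i(s_α) γ_{ij}(x_α). Then for all M, N ∈ M_{n_a}: ⟨Φ_M, G₁ Φ_N⟩ = ∑_{i,j=1}^{n_s} ∑_{k=1}^{m} γ_{ij}^{(k)} N_i^{(k)} ⟨Φ_N, Φ_N⟩ if M = N, and ⟨Φ_M, G₁ Φ_N⟩ = 0 if M ≠ N. -/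
open MeasureTheory Finset Function

namespace MeasureTheory

open Finset

variable {ι : Type*} [Fintype ι] {X : ι → Type*} [∀ i, MeasurableSpace (X i)]
  {μ : (i : ι) → Measure (X i)} [∀ i, SigmaFinite (μ i)] {F : Type*} [NormedAddCommGroup F]

theorem integral_comp_eval_pi [DecidableEq ι] [NormedSpace ℝ F] {i : ι} {f : X i → F}
    (hf : AEStronglyMeasurable f (μ i)) :
    ∫ x, f (x i) ∂Measure.pi μ = (∏ j ∈ univ.erase i, (μ j).real Set.univ) • ∫ x, f x ∂μ i := by
  rw [← integral_map (measurable_pi_apply i).aemeasurable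
    (by rw [Measure.pi_map_eval]; exact hf.smul_measure _), Measure.pi_map_eval,
    integral_smul_measure, ENNReal.toReal_prod]
  rfl

theorem Integrable.comp_eval_pi {i : ι} {f : X i → F} (hf : Integrable f (μ i))
    (hμ : ∀ j ≠ i, μ j Set.univ ≠ ⊤) : Integrable (fun x => f (x i)) (Measure.pi μ) := by
  classical
  refine Integrable.comp_measurable ?_ (measurable_pi_apply i)
  rw [Measure.pi_map_eval]
  exact hf.smul_measure (ENNReal.prod_ne_top fun j hj => hμ j (Finset.ne_of_mem_erase hj))

theorem setIntegral_univ_pi_comp_eval [DecidableEq ι] [NormedSpace ℝ F] {s : (i : ι) → Set (X i)}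
    {i : ι} {f : X i → F} (hf : AEStronglyMeasurable f ((μ i).restrict (s i))) :
    ∫ x in Set.univ.pi s, f (x i) ∂Measure.pi μ
      = (∏ j ∈ univ.erase i, (μ j).real (s j)) • ∫ x in s i, f x ∂μ i := by
  rw [Measure.restrict_pi_pi, integral_comp_eval_pi hf]
  simp only [measureReal_restrict_apply_univ]

theorem IntegrableOn.comp_eval_univ_pi {s : (i : ι) → Set (X i)} {i : ι} {f : X i → F}
    (hf : IntegrableOn f (s i) (μ i)) (hμ : ∀ j ≠ i, μ j (s j) ≠ ⊤) :
    IntegrableOn (fun x => f (x i)) (Set.univ.pi s) (Measure.pi μ) := by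
  rw [IntegrableOn, Measure.restrict_pi_pi]
  exact Integrable.comp_eval_pi (μ := fun j => (μ j).restrict (s j)) hf fun j hj => by
    simpa using hμ j hj

end MeasureTheory

namespace ABMFormal

variable {d m n_s n_a : ℕ} {A : Fin m → Set (E d)}

def cellBox (A : Fin m → Set (E d)) (κ : Fin n_a → Fin m) : Set (Fin n_a → E d) :=
  Set.univ.pi fun α => A (κ α)

def cellCount (κ : Fin n_a → Fin m) (S : Fin n_a → Fin n_s) (i : Fin n_s) (k : Fin m) : ℕ :=
  #{α | κ α = k ∧ S α = i}

theorem measurableSet_cellBox (hAm : ∀ k, MeasurableSet (A k)) (κ : Fin n_a → Fin m) :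
    MeasurableSet (cellBox A κ) :=
  MeasurableSet.univ_pi fun α => hAm (κ α)

theorem pairwise_disjoint_cellBox (hA : Pairwise (Disjoint on A)) :
    Pairwise (Disjoint on cellBox (n_a := n_a) A) := by
  intro κ κ' hne
  obtain ⟨α, hα⟩ := Function.ne_iff.mp hne
  exact Set.disjoint_univ_pi.mpr ⟨α, hA hα⟩

theorem posSet_eq_iUnion_cellBox {Xdom : Set (E d)} (hcover : ⋃ k, A k = Xdom) :
    posSet Xdom n_a = ⋃ κ, cellBox A κ := by
  rw [posSet, ← hcover]
  exact (Set.iUnion_univ_pi fun _ k => A k).symm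

theorem volume_real_cellBox (κ : Fin n_a → Fin m) :
    volume.real (cellBox A κ) = ∏ α, volume.real (A (κ α)) := by
  rw [cellBox, measureReal_def, volume_pi_pi, ENNReal.toReal_prod]
  rfl

theorem occ_eq_cellCount (hA : Pairwise (Disjoint on A)) {κ : Fin n_a → Fin m}
    {X : Fin n_a → E d} (hX : X ∈ cellBox A κ) (S : Fin n_a → Fin n_s) (i : Fin n_s) (k : Fin m) :
    occ A X S i k = cellCount κ S i k := by
  rw [occ, cellCount, ← Set.ncard_coe_finset]
  congr 1
  ext α
  simp only [coe_filter, mem_univ, true_and]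
  refine and_congr_left fun _ => ⟨fun hk => ?_, fun hk => hk ▸ hX α trivial⟩
  by_contra hne
  exact Set.disjoint_left.mp (hA hne) (hX α trivial) hk

theorem Phi_eq_of_mem_cellBox (hA : Pairwise (Disjoint on A)) {κ : Fin n_a → Fin m}
    {X : Fin n_a → E d} (hX : X ∈ cellBox A κ) (N : Fin n_s → Fin m → ℤ) (S : Fin n_a → Fin n_s) :
    Phi A N X S = if ∀ i k, (cellCount κ S i k : ℤ) = N i k then 1 else 0 := by
  simp only [Phi, occ_eq_cellCount hA hX]

theorem Phi_mul_self (N : Fin n_s → Fin m → ℤ) (X : Fin n_a → E d) (S : Fin n_a → Fin n_s) :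
    Phi A N X S * Phi A N X S = Phi A N X S := by
  unfold Phi; split_ifs <;> norm_num

theorem Phi_mul_Phi_of_ne {M N : Fin n_s → Fin m → ℤ} (h : M ≠ N) (X : Fin n_a → E d)
    (S : Fin n_a → Fin n_s) : Phi A M X S * Phi A N X S = 0 := by
  unfold Phi
  split_ifs with hM hN
  · exact absurd (funext₂ fun i k => (hM i k).symm.trans (hN i k)) h
  all_goals norm_num

theorem sum_deltaS_mul_comp_eq_sum_cellCount (κ : Fin n_a → Fin m) (S : Fin n_a → Fin n_s)
    (i : Fin n_s) (g : Fin m → ℝ) :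
    ∑ α, deltaS i (S α) * g (κ α) = ∑ k, (cellCount κ S i k : ℝ) * g k := by
  rw [← Finset.sum_fiberwise univ κ]
  refine sum_congr rfl fun k _ => ?_
  calc ∑ α with κ α = k, deltaS i (S α) * g (κ α)
      = (∑ α with κ α = k, if S α = i then (1 : ℝ) else 0) * g k := by
        rw [sum_mul]
        exact sum_congr rfl fun α hα => by rw [(mem_filter.1 hα).2]; rfl
    _ = (cellCount κ S i k : ℝ) * g k := by rw [sum_boole, filter_filter, cellCount]

theorem setIntegral_eq_gammaK_mul (γ : Fin n_s → Fin n_s → E d → ℝ) (i j : Fin n_s) {k : Fin m}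
    (hk : volume (A k) ≠ ⊤) : ∫ x in A k, γ i j x = gammaK A γ i j k * volume.real (A k) := by
  rcases eq_or_ne (volume (A k)) 0 with h0 | h0
  · rw [Measure.restrict_eq_zero.mpr h0, integral_zero_measure, measureReal_def, h0,
      ENNReal.toReal_zero, mul_zero]
  · rw [gammaK, measureReal_def, div_mul_cancel₀ _ (ENNReal.toReal_pos h0 hk).ne']

theorem volume_cellBox_ne_top (hfin : ∀ k, volume (A k) ≠ ⊤) (κ : Fin n_a → Fin m) :
    volume (cellBox A κ) ≠ ⊤ := by
  rw [cellBox, volume_pi_pi]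
  exact ENNReal.prod_ne_top fun α _ => hfin (κ α)

theorem integrableOn_cellBox_comp_eval (hfin : ∀ k, volume (A k) ≠ ⊤) {f : E d → ℝ}
    (hf : ∀ k, IntegrableOn f (A k)) (κ : Fin n_a → Fin m) (α : Fin n_a) :
    IntegrableOn (fun X => f (X α)) (cellBox A κ) := by
  rw [cellBox, volume_pi]
  exact (hf (κ α)).comp_eval_univ_pi fun β _ => hfin (κ β)

theorem setIntegral_cellBox_comp_eval (hfin : ∀ k, volume (A k) ≠ ⊤)
    (γ : Fin n_s → Fin n_s → E d → ℝ) (i j : Fin n_s) (hγ : ∀ k, IntegrableOn (γ i j) (A k))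
    (κ : Fin n_a → Fin m) (α : Fin n_a) :
    ∫ X in cellBox A κ, γ i j (X α) = gammaK A γ i j (κ α) * volume.real (cellBox A κ) := by
  rw [volume_real_cellBox, cellBox, volume_pi,
    setIntegral_univ_pi_comp_eval (hγ (κ α)).aestronglyMeasurable,
    setIntegral_eq_gammaK_mul γ i j (hfin (κ α)), ← mul_prod_erase univ _ (mem_univ α), smul_eq_mul]
  ring

theorem setIntegral_cellBox_rate (hfin : ∀ k, volume (A k) ≠ ⊤)
    (γ : Fin n_s → Fin n_s → E d → ℝ) (hγ : ∀ i j k, IntegrableOn (γ i j) (A k))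
    (S : Fin n_a → Fin n_s) (κ : Fin n_a → Fin m) :
    ∫ X in cellBox A κ, ∑ i, ∑ j, ∑ α, fFirst γ i j α X S
      = (∑ i, ∑ j, ∑ k, gammaK A γ i j k * cellCount κ S i k) * volume.real (cellBox A κ) := by
  have hint (i j α) : Integrable (fun X => fFirst γ i j α X S) (volume.restrict (cellBox A κ)) :=
    (integrableOn_cellBox_comp_eval hfin (hγ i j) κ α).const_mul (deltaS i (S α))
  calc ∫ X in cellBox A κ, ∑ i, ∑ j, ∑ α, fFirst γ i j α X S
      = ∑ i, ∑ j, ∑ α, deltaS i (S α) * gammaK A γ i j (κ α) * volume.real (cellBox A κ) := by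
        rw [integral_finsetSum _ fun i _ => integrable_finsetSum _ fun j _ =>
          integrable_finsetSum _ fun α _ => hint i j α]
        refine sum_congr rfl fun i _ => ?_
        rw [integral_finsetSum _ fun j _ => integrable_finsetSum _ fun α _ => hint i j α]
        refine sum_congr rfl fun j _ => ?_
        rw [integral_finsetSum _ fun α _ => hint i j α]
        refine sum_congr rfl fun α _ => ?_
        rw [mul_assoc, ← setIntegral_cellBox_comp_eval hfin γ i j (hγ i j)]
        exact integral_const_mul _ _
    _ = _ := by
        simp_rw [← sum_mul, sum_deltaS_mul_comp_eq_sum_cellCount, mul_comm (cellCount κ S _ _ : ℝ)]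

theorem integrableOn_mul_Phi_cellBox (hAm : ∀ k, MeasurableSet (A k))
    (hA : Pairwise (Disjoint on A)) {κ : Fin n_a → Fin m} {f : (Fin n_a → E d) → ℝ}
    (hf : IntegrableOn f (cellBox A κ)) (N : Fin n_s → Fin m → ℤ) (S : Fin n_a → Fin n_s) :
    IntegrableOn (fun X => f X * Phi A N X S) (cellBox A κ) :=
  IntegrableOn.congr_fun (hf.mul_const _) (fun X hX => by rw [Phi_eq_of_mem_cellBox hA hX])
    (measurableSet_cellBox hAm κ)

theorem setIntegral_cellBox_rate_mul_Phi (hAm : ∀ k, MeasurableSet (A k))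
    (hA : Pairwise (Disjoint on A)) (hfin : ∀ k, volume (A k) ≠ ⊤)
    (γ : Fin n_s → Fin n_s → E d → ℝ) (hγ : ∀ i j k, IntegrableOn (γ i j) (A k))
    (N : Fin n_s → Fin m → ℤ) (S : Fin n_a → Fin n_s) (κ : Fin n_a → Fin m) :
    ∫ X in cellBox A κ, (∑ i, ∑ j, ∑ α, fFirst γ i j α X S) * Phi A N X S
      = (∑ i, ∑ j, ∑ k, gammaK A γ i j k * N i k) * ∫ X in cellBox A κ, Phi A N X S := by
  have hm := measurableSet_cellBox hAm κ
  have hPhi : Set.EqOn (Phi A N · S)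
      (fun _ => if ∀ i k, (cellCount κ S i k : ℤ) = N i k then 1 else 0) (cellBox A κ) :=
    fun X hX => Phi_eq_of_mem_cellBox hA hX N S
  rw [setIntegral_congr_fun hm hPhi,
    setIntegral_congr_fun hm fun X hX => congrArg (_ * ·) (hPhi hX),
    integral_mul_const, setIntegral_cellBox_rate hfin γ hγ, setIntegral_const, smul_eq_mul]
  split_ifs with hN
  · simp_rw [← hN, Int.cast_natCast, mul_one]
  · simp

theorem setIntegral_posSet_eq_sum_cellBox {Xdom : Set (E d)} (hAm : ∀ k, MeasurableSet (A k))
    (hA : Pairwise (Disjoint on A)) (hcover : ⋃ k, A k = Xdom) {f : (Fin n_a → E d) → ℝ}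
    (hf : ∀ κ, IntegrableOn f (cellBox A κ)) :
    ∫ X in posSet Xdom n_a, f X = ∑ κ, ∫ X in cellBox A κ, f X := by
  rw [posSet_eq_iUnion_cellBox hcover, integral_iUnion (measurableSet_cellBox hAm)
    (pairwise_disjoint_cellBox hA) (integrableOn_finite_iUnion.mpr hf), tsum_fintype]

theorem setIntegral_posSet_rate_mul_Phi {Xdom : Set (E d)} (hAm : ∀ k, MeasurableSet (A k))
    (hA : Pairwise (Disjoint on A)) (hcover : ⋃ k, A k = Xdom) (hfin : ∀ k, volume (A k) ≠ ⊤)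
    (γ : Fin n_s → Fin n_s → E d → ℝ) (hγ : ∀ i j k, IntegrableOn (γ i j) (A k))
    (N : Fin n_s → Fin m → ℤ) (S : Fin n_a → Fin n_s) :
    ∫ X in posSet Xdom n_a, (∑ i, ∑ j, ∑ α, fFirst γ i j α X S) * Phi A N X S
      = (∑ i, ∑ j, ∑ k, gammaK A γ i j k * N i k) * ∫ X in posSet Xdom n_a, Phi A N X S := by
  have hrate (κ : Fin n_a → Fin m) :
      IntegrableOn (fun X => ∑ i, ∑ j, ∑ α, fFirst γ i j α X S) (cellBox A κ) :=
    integrable_finsetSum _ fun i _ => integrable_finsetSum _ fun j _ =>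
      integrable_finsetSum _ fun α _ =>
        (integrableOn_cellBox_comp_eval hfin (hγ i j) κ α).const_mul (deltaS i (S α))
  have hone (κ : Fin n_a → Fin m) : IntegrableOn (fun X => Phi A N X S) (cellBox A κ) := by
    simpa using integrableOn_mul_Phi_cellBox hAm hA
      (integrableOn_const (C := (1 : ℝ)) (volume_cellBox_ne_top hfin κ)) N S
  rw [setIntegral_posSet_eq_sum_cellBox hAm hA hcover fun κ =>
      integrableOn_mul_Phi_cellBox hAm hA (hrate κ) N S,
    setIntegral_posSet_eq_sum_cellBox hAm hA hcover hone, mul_sum]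
  exact sum_congr rfl fun κ _ => setIntegral_cellBox_rate_mul_Phi hAm hA hfin γ hγ N S κ

theorem ip_Phi_G1First_Phi_self {Xdom : Set (E d)} (hAm : ∀ k, MeasurableSet (A k))
    (hA : Pairwise (Disjoint on A)) (hcover : ⋃ k, A k = Xdom) (hfin : ∀ k, volume (A k) ≠ ⊤)
    (γ : Fin n_s → Fin n_s → E d → ℝ) (hγ : ∀ i j k, IntegrableOn (γ i j) (A k))
    (N : Fin n_s → Fin m → ℤ) :
    ip Xdom (Phi (n_a := n_a) A N) (G1First γ (Phi A N))
      = (∑ i, ∑ j, ∑ k, gammaK A γ i j k * N i k) * ip Xdom (Phi (n_a := n_a) A N) (Phi A N) := by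
  have hidem (c : ℝ) (X : Fin n_a → E d) (S : Fin n_a → Fin n_s) :
      Phi A N X S * (c * Phi A N X S) = c * Phi A N X S := by
    rw [mul_left_comm, Phi_mul_self]
  simp only [ip, G1First, hidem, Phi_mul_self]
  rw [sum_congr rfl fun S _ => setIntegral_posSet_rate_mul_Phi hAm hA hcover hfin γ hγ N S,
    ← mul_sum, mul_left_comm]

theorem ip_Phi_G1First_Phi_of_ne {Xdom : Set (E d)} (γ : Fin n_s → Fin n_s → E d → ℝ)
    {M N : Fin n_s → Fin m → ℤ} (h : M ≠ N) :
    ip Xdom (Phi (n_a := n_a) A M) (G1First γ (Phi A N)) = 0 := by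
  simp only [ip, G1First, mul_left_comm (Phi A M _ _), Phi_mul_Phi_of_ne h, mul_zero,
    integral_zero, sum_const_zero]

theorem statement10_general (d m n_s n_a : ℕ)
    (Xdom : Set (E d)) (hXcomp : IsCompact Xdom)
    (A : Fin m → Set (E d)) (hAmeas : ∀ k, MeasurableSet (A k))
    (hAdisj : Pairwise (Disjoint on A))
    (hAcover : (⋃ k, A k) = Xdom)
    (γ : Fin n_s → Fin n_s → E d → ℝ)
    (hγint : ∀ i j, IntegrableOn (γ i j) Xdom)
    (M N : Fin n_s → Fin m → ℤ) :
    (M = N →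
      ip Xdom (Phi (n_a := n_a) A M) (G1First γ (Phi A N))
        = (∑ i : Fin n_s, ∑ j : Fin n_s, ∑ k : Fin m, gammaK A γ i j k * (N i k : ℝ)) *
            ip Xdom (Phi (n_a := n_a) A N) (Phi A N)) ∧
    (M ≠ N → ip Xdom (Phi (n_a := n_a) A M) (G1First γ (Phi A N)) = 0) := by
  have hAX (k : Fin m) : A k ⊆ Xdom := hAcover ▸ Set.subset_iUnion A k
  have hfin (k : Fin m) : volume (A k) ≠ ⊤ :=
    ne_top_of_le_ne_top hXcomp.measure_lt_top.ne (measure_mono (hAX k))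
  have hγ (i j : Fin n_s) (k : Fin m) : IntegrableOn (γ i j) (A k) := (hγint i j).mono_set (hAX k)
  refine ⟨?_, ip_Phi_G1First_Phi_of_ne γ⟩
  rintro rfl
  exact ip_Phi_G1First_Phi_self hAmeas hAdisj hAcover hfin γ hγ M

/-- for the outflow part `G₁` of the first-order adoption generator,
`⟨Φ_M, G₁ Φ_N⟩ = (∑_{i,j} ∑_k γ_{ij}^{(k)} N_i^{(k)}) ⟨Φ_N, Φ_N⟩` if `M = N`, and
`⟨Φ_M, G₁ Φ_N⟩ = 0` if `M ≠ N`. -/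
theorem statement10 (d m n_s n_a : ℕ) (hns : 1 ≤ n_s) (hna : 1 ≤ n_a)
    (Xdom : Set (E d)) (hXcomp : IsCompact Xdom) (hXpos : 0 < volume Xdom)
    (A : Fin m → Set (E d)) (hAmeas : ∀ k, MeasurableSet (A k))
    (hAdisj : Pairwise (Disjoint on A)) (hApos : ∀ k, 0 < volume (A k))
    (hAcover : (⋃ k, A k) = Xdom)
    (γ : Fin n_s → Fin n_s → E d → ℝ)
    (hγnonneg : ∀ i j x, 0 ≤ γ i j x) (hγdiag : ∀ i x, γ i i x = 0)
    (hγint : ∀ i j, IntegrableOn (γ i j) Xdom)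
    (M N : Fin n_s → Fin m → ℤ)
    (hM : M ∈ Mset n_s m n_a) (hN : N ∈ Mset n_s m n_a) :
    (M = N →
      ip Xdom (Phi (n_a := n_a) A M) (G1First γ (Phi A N))
        = (∑ i : Fin n_s, ∑ j : Fin n_s, ∑ k : Fin m, gammaK A γ i j k * (N i k : ℝ)) *
            ip Xdom (Phi (n_a := n_a) A N) (Phi A N)) ∧
    (M ≠ N → ip Xdom (Phi (n_a := n_a) A M) (G1First γ (Phi A N)) = 0) :=
  statement10_general d m n_s n_a Xdom hXcomp A hAmeas hAdisj hAcover γ hγint M N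

end ABMFormal
end

section
/- Define (G₂ p)(X, S) = ∑_{i,j=1}^{n_s} ∑_{α=1}^{n_a} f_{ij}^{(α)}(X, S + i e_α − j e_α) p(X, S + i e_α − j e_α) with the first-order rate functions f_{ij}^{(α)}(X, S) = δ_i(s_α) γ_{ij}(x_α), where S + i e_α − j e_α denotes coordinatewise integer arithmetic on the status vector and functions of (X, S) are extended by 0 when the status vector leaves S^{n_a}. Then for all M, N ∈ M_{n_a}: ⟨Φ_M, G₂ Φ_N⟩ = γ_{ij}^{(k)} N_i^{(k)} ⟨Φ_N, Φ_N⟩ if M = N + E_j^{(k)} − E_i^{(k)} for some statuses i ≠ j and subset index k, and ⟨Φ_M, G₂ Φ_N⟩ = 0 otherwise. -/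
open MeasureTheory Finset Function

namespace ABMFormal

/-!
Changing the status of an agent in the cell `A_k` from `j` to `i` changes the occupation matrix
by `E_i^{(k)} - E_j^{(k)}`, so `Φ_N(X, S + i e_α - j e_α) = Φ_{N + E_j^{(k)} - E_i^{(k)}}(X, S)`.
As the `Φ_M` are indicators of disjoint events, in `Φ_M · G₂Φ_N` only the changes that turn `N`
into `M` survive: none in the unmatched case (the diagonal rates vanish), and exactly the changes
`j → i` of agents lying in `A_k` in the matched case. Integrating out the position of the changed
agent factors its contribution as `∫_{A_k} γ_{ij}` times the mass of `Φ_{N - E_i^{(k)}}` for the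
remaining `n_a - 1` agents. Writing `N_i^{(k)} Φ_N` as the number of agents of status `i` in `A_k`
gives the same expression for `N_i^{(k)} ⟨Φ_N, Φ_N⟩` with `μ(A_k)` in place of `∫_{A_k} γ_{ij}`.
-/

theorem sum_deltaS_mul_comp_removeNth {n n_s : ℕ} (p : Fin (n + 1)) (j : Fin n_s)
    (F : Fin n_s → (Fin n → Fin n_s) → ℝ) :
    ∑ S : Fin (n + 1) → Fin n_s, deltaS j (S p) * F (S p) (p.removeNth S) = ∑ S', F j S' := by
  rw [← (Fin.insertNthEquiv (fun _ => Fin n_s) p).sum_comp, Fintype.sum_prod_type]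
  simp [deltaS, Fin.insertNthEquiv, Fin.removeNth_insertNth]

theorem Emat_sub_Emat_inj {n_s m : ℕ} {i j i' j' : Fin n_s} {k k' : Fin m} (hij : i ≠ j)
    (h : Emat j k - Emat i k = Emat j' k' - Emat i' k') : i' = i ∧ j' = j ∧ k' = k := by
  have hj := congrFun (congrFun h j) k
  have hi := congrFun (congrFun h i) k
  simp only [Pi.sub_apply, Emat, hij, hij.symm] at hi hj
  split_ifs at hi hj <;> grind

theorem integral_comp_mul_comp_removeNth {α 𝕜 : Type*} [MeasurableSpace α] [RCLike 𝕜]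
    (ν : Measure α) [SigmaFinite ν] {n : ℕ} (p : Fin (n + 1)) (g : α → 𝕜)
    (H : (Fin n → α) → 𝕜) :
    ∫ X, g (X p) * H (p.removeNth X) ∂Measure.pi (fun _ => ν)
      = (∫ x, g x ∂ν) * ∫ Y, H Y ∂Measure.pi (fun _ => ν) := by
  rw [← integral_prod_mul, ← (measurePreserving_piFinSuccAbove (fun _ => ν) p).integral_comp']
  rfl

theorem integrable_comp_mul_comp_removeNth {α 𝕜 : Type*} [MeasurableSpace α] [RCLike 𝕜]
    {ν : Measure α} [SigmaFinite ν] {n : ℕ} (p : Fin (n + 1)) {g : α → 𝕜}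
    {H : (Fin n → α) → 𝕜} (hg : Integrable g ν) (hH : Integrable H (Measure.pi fun _ => ν)) :
    Integrable (fun X => g (X p) * H (p.removeNth X)) (Measure.pi fun _ => ν) :=
  ((measurePreserving_piFinSuccAbove (fun _ => ν) p).integrable_comp_emb
    (MeasurableEquiv.measurableEmbedding _)).mpr (hg.mul_prod hH)

theorem ae_pi_forall_of_ae {α : Type*} [MeasurableSpace α] {ν : Measure α} [SigmaFinite ν]
    {n : ℕ} {p : α → Prop} (hp : ∀ᵐ x ∂ν, p x) :
    ∀ᵐ X ∂Measure.pi (fun _ : Fin n => ν), ∀ i, p (X i) :=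
  ae_all_iff.mpr fun _ => (Measure.tendsto_eval_ae_ae (μ := fun _ => ν)).eventually hp

section Occupation

variable {d m n_s n : ℕ} {A : Fin m → Set (E d)}

theorem mem_iff_eq_of_mem (hAdisj : Pairwise (Disjoint on A)) {x : E d} {k : Fin m}
    (hx : x ∈ A k) (k' : Fin m) : x ∈ A k' ↔ k' = k :=
  ⟨fun h => hAdisj.eq (Set.not_disjoint_iff.mpr ⟨x, h, hx⟩), fun h => h ▸ hx⟩

theorem indicator_apply_of_mem (hAdisj : Pairwise (Disjoint on A)) {x : E d} {k' : Fin m}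
    (hx : x ∈ A k') (k : Fin m) (g : E d → ℝ) :
    (A k).indicator g x = if k' = k then g x else 0 := by
  classical
  simp only [Set.indicator_apply, mem_iff_eq_of_mem hAdisj hx, eq_comm (a := k)]

/-- The occupation matrix `(N_i^{(k)})` of a configuration. -/
noncomputable def occMat (A : Fin m → Set (E d)) (X : Fin n → E d) (S : Fin n → Fin n_s) :
    Fin n_s → Fin m → ℤ :=
  fun i k => occ A X S i k

theorem Phi_eq_ite (N : Fin n_s → Fin m → ℤ) (X : Fin n → E d) (S : Fin n → Fin n_s) :
    Phi A N X S = if occMat A X S = N then 1 else 0 := by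
  simp only [Phi, occMat, funext_iff]

open Classical in
theorem occ_cast_eq_sum {R : Type*} [AddCommMonoidWithOne R] (X : Fin n → E d)
    (S : Fin n → Fin n_s) (i : Fin n_s) (k : Fin m) :
    (occ A X S i k : R) = ∑ α, if X α ∈ A k ∧ S α = i then 1 else 0 := by
  rw [occ, Set.ncard_eq_toFinset_card', Set.toFinset_ofPred, Finset.card_filter]
  push_cast
  rfl

theorem occMat_eq_Emat_add_occMat_removeNth (hAdisj : Pairwise (Disjoint on A))
    {X : Fin (n + 1) → E d} {p : Fin (n + 1)} {k : Fin m} (hx : X p ∈ A k)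
    (S : Fin (n + 1) → Fin n_s) :
    occMat A X S = Emat (S p) k + occMat A (p.removeNth X) (p.removeNth S) := by
  ext i k'
  simp only [occMat, Pi.add_apply, occ_cast_eq_sum, Fin.sum_univ_succAbove _ p,
    mem_iff_eq_of_mem hAdisj hx, Emat, eq_comm, and_comm]
  rfl

theorem Phi_eq_Phi_removeNth (hAdisj : Pairwise (Disjoint on A))
    {X : Fin (n + 1) → E d} {p : Fin (n + 1)} {k : Fin m} (hx : X p ∈ A k)
    (P : Fin n_s → Fin m → ℤ) (S : Fin (n + 1) → Fin n_s) :
    Phi A P X S = Phi A (P - Emat (S p) k) (p.removeNth X) (p.removeNth S) := by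
  simp only [Phi_eq_ite, occMat_eq_Emat_add_occMat_removeNth hAdisj hx, eq_sub_iff_add_eq']

theorem Phi_update (hAdisj : Pairwise (Disjoint on A))
    {X : Fin (n + 1) → E d} {p : Fin (n + 1)} {k : Fin m} (hx : X p ∈ A k)
    (N : Fin n_s → Fin m → ℤ) (S : Fin (n + 1) → Fin n_s) (i : Fin n_s) :
    Phi A N X (update S p i) = Phi A (N + Emat (S p) k - Emat i k) X S := by
  rw [Phi_eq_Phi_removeNth hAdisj hx, Phi_eq_Phi_removeNth hAdisj hx, update_self,
    Fin.removeNth_update]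
  congr 1
  abel

theorem Phi_mul_Phi (M N : Fin n_s → Fin m → ℤ) (X : Fin n → E d) (S : Fin n → Fin n_s) :
    Phi A M X S * Phi A N X S = if M = N then Phi A M X S else 0 := by
  simp only [Phi_eq_ite]
  split_ifs <;> simp_all

theorem intCast_mul_Phi (N : Fin n_s → Fin m → ℤ) (i : Fin n_s) (k : Fin m)
    (X : Fin n → E d) (S : Fin n → Fin n_s) :
    (N i k : ℝ) * Phi A N X S
      = ∑ α, deltaS i (S α) * ((A k).indicator 1 (X α) * Phi A N X S) := by
  rw [Phi_eq_ite]
  split_ifs with h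
  · subst h
    simp only [occMat, Int.cast_natCast, mul_one]
    simp only [occ_cast_eq_sum, deltaS]
    refine sum_congr rfl fun β _ => ?_
    by_cases hx : X β ∈ A k <;> by_cases hs : S β = i <;> simp [hx, hs]
  · simp

end Occupation

section Pointwise

variable {d m n_s n : ℕ} {A : Fin m → Set (E d)} {γ : Fin n_s → Fin n_s → E d → ℝ}
  {M N : Fin n_s → Fin m → ℤ} {X : Fin (n + 1) → E d} {S : Fin (n + 1) → Fin n_s}

theorem eq_add_Emat_sub_Emat_iff {i j i' j' : Fin n_s} {k k' : Fin m} (hij : i ≠ j)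
    (hMN : M = N + Emat j k - Emat i k) :
    M = N + Emat j' k' - Emat i' k' ↔ i' = i ∧ j' = j ∧ k' = k := by
  subst hMN
  refine ⟨fun h => Emat_sub_Emat_inj hij ?_, by rintro ⟨rfl, rfl, rfl⟩; rfl⟩
  simpa only [add_sub_assoc, add_right_inj] using h

theorem Phi_mul_G2First_term (hAdisj : Pairwise (Disjoint on A)) {α : Fin (n + 1)} {k : Fin m}
    (hx : X α ∈ A k) (i j : Fin n_s) :
    Phi A M X S * (deltaS j (S α) * γ i j (X α) * Phi A N X (update S α i))
      = if M = N + Emat j k - Emat i k then deltaS j (S α) * γ i j (X α) * Phi A M X S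
        else 0 := by
  by_cases hs : S α = j
  · rw [Phi_update hAdisj hx, hs, mul_left_comm, Phi_mul_Phi]
    split_ifs <;> ring
  · simp [deltaS, hs]

theorem Phi_mul_G2First_of_eq (hAdisj : Pairwise (Disjoint on A)) {i j : Fin n_s} {k : Fin m}
    (hij : i ≠ j) (hMN : M = N + Emat j k - Emat i k) (hX : ∀ α, ∃ k', X α ∈ A k') :
    Phi A M X S * G2First γ (Phi A N) X S
      = ∑ α, deltaS j (S α) * ((A k).indicator (γ i j) (X α) * Phi A M X S) := by
  simp only [G2First, mul_sum]
  rw [(sum_congr rfl fun _ _ => sum_comm).trans sum_comm]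
  refine sum_congr rfl fun α _ => ?_
  obtain ⟨k', hk'⟩ := hX α
  simp_rw [Phi_mul_G2First_term hAdisj hk', eq_add_Emat_sub_Emat_iff hij hMN,
    indicator_apply_of_mem hAdisj hk']
  simp [ite_and, mul_assoc]

theorem Phi_mul_G2First_eq_zero (hAdisj : Pairwise (Disjoint on A))
    (hγdiag : ∀ i x, γ i i x = 0) (hMN : ¬∃ i j k, i ≠ j ∧ M = N + Emat j k - Emat i k)
    (hX : ∀ α, ∃ k', X α ∈ A k') :
    Phi A M X S * G2First γ (Phi A N) X S = 0 := by
  simp only [G2First, mul_sum]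
  refine sum_eq_zero fun i _ => sum_eq_zero fun j _ => sum_eq_zero fun α _ => ?_
  obtain ⟨k, hk⟩ := hX α
  rw [Phi_mul_G2First_term hAdisj hk]
  split_ifs with h
  · obtain rfl : i = j := by_contra fun hij => hMN ⟨i, j, k, hij, h⟩
    simp [hγdiag]
  · rfl

end Pointwise

section Integration

variable {d m n_s n : ℕ} {A : Fin m → Set (E d)} {ν : Measure (E d)} [IsFiniteMeasure ν]

theorem measurable_Phi (hAmeas : ∀ k, MeasurableSet (A k)) (P : Fin n_s → Fin m → ℤ)
    (S : Fin n → Fin n_s) : Measurable fun X : Fin n → E d => Phi A P X S := by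
  classical
  have hocc : Measurable fun X : Fin n → E d => occMat A X S := by
    refine measurable_pi_lambda _ fun i => measurable_pi_lambda _ fun k => ?_
    simp only [occMat, occ_cast_eq_sum]
    refine Finset.measurable_sum _ fun α _ => Measurable.ite ?_ measurable_const measurable_const
    exact (measurable_pi_apply α (hAmeas k)).inter (MeasurableSet.const _)
  simp only [Phi_eq_ite]
  exact Measurable.ite (hocc (measurableSet_singleton P)) measurable_const measurable_const

theorem integrable_Phi (hAmeas : ∀ k, MeasurableSet (A k)) (P : Fin n_s → Fin m → ℤ)
    (S : Fin n → Fin n_s) : Integrable (fun X => Phi A P X S) (Measure.pi fun _ => ν) := by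
  refine Integrable.of_bound (measurable_Phi hAmeas P S).aestronglyMeasurable 1
    (Filter.Eventually.of_forall fun X => ?_)
  rw [Phi_eq_ite]
  split_ifs <;> simp

theorem indicator_mul_Phi_eq (hAdisj : Pairwise (Disjoint on A)) (g : E d → ℝ) (k : Fin m)
    (P : Fin n_s → Fin m → ℤ) (X : Fin (n + 1) → E d) (S : Fin (n + 1) → Fin n_s)
    (α : Fin (n + 1)) :
    (A k).indicator g (X α) * Phi A P X S
      = (A k).indicator g (X α) * Phi A (P - Emat (S α) k) (α.removeNth X) (α.removeNth S) := by
  by_cases hx : X α ∈ A k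
  · rw [← Phi_eq_Phi_removeNth hAdisj hx]
  · simp [Set.indicator_of_notMem hx]

theorem integral_indicator_mul_Phi (hAmeas : ∀ k, MeasurableSet (A k))
    (hAdisj : Pairwise (Disjoint on A)) (g : E d → ℝ) (k : Fin m) (P : Fin n_s → Fin m → ℤ)
    (S : Fin (n + 1) → Fin n_s) (α : Fin (n + 1)) :
    ∫ X, (A k).indicator g (X α) * Phi A P X S ∂Measure.pi (fun _ => ν)
      = (∫ x in A k, g x ∂ν) *
          ∫ X', Phi A (P - Emat (S α) k) X' (α.removeNth S) ∂Measure.pi (fun _ => ν) := by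
  simp_rw [indicator_mul_Phi_eq hAdisj g k P _ S α]
  rw [integral_comp_mul_comp_removeNth ν α ((A k).indicator g)
    (fun X' => Phi A (P - Emat (S α) k) X' (α.removeNth S)), integral_indicator (hAmeas k)]

theorem integrable_indicator_mul_Phi (hAmeas : ∀ k, MeasurableSet (A k))
    (hAdisj : Pairwise (Disjoint on A)) {g : E d → ℝ} (hg : Integrable g ν) (k : Fin m)
    (P : Fin n_s → Fin m → ℤ) (S : Fin (n + 1) → Fin n_s) (α : Fin (n + 1)) :
    Integrable (fun X => (A k).indicator g (X α) * Phi A P X S) (Measure.pi fun _ => ν) := by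
  simp_rw [indicator_mul_Phi_eq hAdisj g k P _ S α]
  exact integrable_comp_mul_comp_removeNth α (hg.indicator (hAmeas k)) (integrable_Phi hAmeas _ _)

theorem sum_integral_sum_deltaS_mul_indicator_mul_Phi (hAmeas : ∀ k, MeasurableSet (A k))
    (hAdisj : Pairwise (Disjoint on A)) {g : E d → ℝ} (hg : Integrable g ν) (s : Fin n_s)
    (k : Fin m) (P : Fin n_s → Fin m → ℤ) :
    ∑ S : Fin (n + 1) → Fin n_s,
        ∫ X, ∑ α, deltaS s (S α) * ((A k).indicator g (X α) * Phi A P X S)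
          ∂Measure.pi (fun _ => ν)
      = (n + 1) * (∫ x in A k, g x ∂ν) *
          ∑ S' : Fin n → Fin n_s, ∫ X', Phi A (P - Emat s k) X' S' ∂Measure.pi (fun _ => ν) := by
  simp_rw [integral_finsetSum _ fun α _ =>
      (integrable_indicator_mul_Phi hAmeas hAdisj hg k P _ α).const_mul _,
    integral_const_mul, integral_indicator_mul_Phi hAmeas hAdisj]
  rw [sum_comm]
  simp_rw [sum_deltaS_mul_comp_removeNth _ s
    (fun s' S' => (∫ x in A k, g x ∂ν) * ∫ X', Phi A (P - Emat s' k) X' S' ∂Measure.pi fun _ => ν)]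
  simp [mul_sum, mul_assoc]

end Integration

section Totals

variable {d m n_s n : ℕ} {A : Fin m → Set (E d)} {ν : Measure (E d)} [IsFiniteMeasure ν]
  {M N : Fin n_s → Fin m → ℤ}

theorem sum_integral_Phi_mul_G2First_of_eq (hAmeas : ∀ k, MeasurableSet (A k))
    (hAdisj : Pairwise (Disjoint on A)) (hcells : ∀ᵐ x ∂ν, ∃ k, x ∈ A k)
    {γ : Fin n_s → Fin n_s → E d → ℝ} {i j : Fin n_s} {k : Fin m} (hγ : Integrable (γ i j) ν)
    (hij : i ≠ j) (hMN : M = N + Emat j k - Emat i k) :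
    ∑ S : Fin (n + 1) → Fin n_s,
        ∫ X, Phi A M X S * G2First γ (Phi A N) X S ∂Measure.pi (fun _ => ν)
      = (n + 1) * (∫ x in A k, γ i j x ∂ν) *
          ∑ S' : Fin n → Fin n_s, ∫ X', Phi A (N - Emat i k) X' S' ∂Measure.pi (fun _ => ν) := by
  have hM : M - Emat j k = N - Emat i k := by rw [hMN]; abel
  rw [← hM, ← sum_integral_sum_deltaS_mul_indicator_mul_Phi hAmeas hAdisj hγ]
  exact sum_congr rfl fun _ _ => integral_congr_ae <|
    (ae_pi_forall_of_ae hcells).mono fun _ hX => Phi_mul_G2First_of_eq hAdisj hij hMN hX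

theorem intCast_mul_sum_integral_Phi_mul_self (hAmeas : ∀ k, MeasurableSet (A k))
    (hAdisj : Pairwise (Disjoint on A)) (i : Fin n_s) (k : Fin m) :
    (N i k : ℝ) * ∑ S : Fin (n + 1) → Fin n_s,
        ∫ X, Phi A N X S * Phi A N X S ∂Measure.pi (fun _ => ν)
      = (n + 1) * ν.real (A k) *
          ∑ S' : Fin n → Fin n_s, ∫ X', Phi A (N - Emat i k) X' S' ∂Measure.pi (fun _ => ν) := by
  have hsq (X : Fin (n + 1) → E d) (S) : Phi A N X S * Phi A N X S = Phi A N X S := by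
    rw [Phi_mul_Phi, if_pos rfl]
  simp_rw [hsq]
  rw [mul_sum]
  simp_rw [← integral_const_mul, intCast_mul_Phi]
  rw [sum_integral_sum_deltaS_mul_indicator_mul_Phi hAmeas hAdisj (g := 1) (integrable_const 1)]
  simp

theorem sum_integral_Phi_mul_G2First_eq_zero (hAdisj : Pairwise (Disjoint on A))
    (hcells : ∀ᵐ x ∂ν, ∃ k, x ∈ A k) {γ : Fin n_s → Fin n_s → E d → ℝ}
    (hγdiag : ∀ i x, γ i i x = 0) (hMN : ¬∃ i j k, i ≠ j ∧ M = N + Emat j k - Emat i k) :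
    ∑ S : Fin (n + 1) → Fin n_s,
        ∫ X, Phi A M X S * G2First γ (Phi A N) X S ∂Measure.pi (fun _ => ν) = 0 :=
  sum_eq_zero fun _ _ => integral_eq_zero_of_ae <|
    (ae_pi_forall_of_ae hcells).mono fun _ hX => Phi_mul_G2First_eq_zero hAdisj hγdiag hMN hX

end Totals

theorem restrict_posSet {d : ℕ} (Xdom : Set (E d)) (n : ℕ) :
    volume.restrict (posSet Xdom n) = Measure.pi fun _ => volume.restrict Xdom := by
  rw [posSet, volume_pi, Measure.restrict_pi_pi]

theorem gammaK_mul_measureReal {d m n_s : ℕ} (A : Fin m → Set (E d))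
    (γ : Fin n_s → Fin n_s → E d → ℝ) (i j : Fin n_s) {k : Fin m} (hk : volume (A k) ≠ ⊤) :
    gammaK A γ i j k * volume.real (A k) = ∫ x in A k, γ i j x := by
  refine div_mul_cancel_of_imp fun h0 => ?_
  rw [Measure.restrict_eq_zero.mpr ((measureReal_eq_zero_iff hk).mp h0), integral_zero_measure]

theorem statement11_general (d m n_s n_a : ℕ) (hna : 1 ≤ n_a)
    (Xdom : Set (E d)) (hXcomp : IsCompact Xdom)
    (A : Fin m → Set (E d)) (hAmeas : ∀ k, MeasurableSet (A k))
    (hAdisj : Pairwise (Disjoint on A))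
    (hAcover : (⋃ k, A k) = Xdom)
    (γ : Fin n_s → Fin n_s → E d → ℝ)
    (hγdiag : ∀ i x, γ i i x = 0)
    (hγint : ∀ i j, IntegrableOn (γ i j) Xdom)
    (M N : Fin n_s → Fin m → ℤ) :
    (∀ (i j : Fin n_s) (k : Fin m), i ≠ j → M = N + Emat j k - Emat i k →
      ip Xdom (Phi (n_a := n_a) A M) (G2First γ (Phi A N))
        = gammaK A γ i j k * (N i k : ℝ) * ip Xdom (Phi (n_a := n_a) A N) (Phi A N)) ∧
    ((¬∃ (i j : Fin n_s) (k : Fin m), i ≠ j ∧ M = N + Emat j k - Emat i k) →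
      ip Xdom (Phi (n_a := n_a) A M) (G2First γ (Phi A N)) = 0) := by
  obtain ⟨n, rfl⟩ : ∃ n, n_a = n + 1 := ⟨n_a - 1, by omega⟩
  have : IsFiniteMeasure (volume.restrict Xdom) :=
    isFiniteMeasure_restrict.mpr hXcomp.measure_lt_top.ne
  have hsub (k : Fin m) : A k ⊆ Xdom := hAcover ▸ Set.subset_iUnion A k
  have hcells : ∀ᵐ x ∂volume.restrict Xdom, ∃ k, x ∈ A k :=
    ae_restrict_of_forall_mem hXcomp.measurableSet fun x hx => Set.mem_iUnion.mp (hAcover ▸ hx)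
  simp only [ip, restrict_posSet]
  refine ⟨fun i j k hij hMN => ?_, fun hMN => ?_⟩
  · rw [sum_integral_Phi_mul_G2First_of_eq hAmeas hAdisj hcells (hγint i j) hij hMN,
      mul_assoc (gammaK A γ i j k), mul_left_comm (N i k : ℝ),
      intCast_mul_sum_integral_Phi_mul_self hAmeas hAdisj i k,
      measureReal_restrict_apply (hAmeas k), Set.inter_eq_left.mpr (hsub k),
      Measure.restrict_restrict_of_subset (hsub k),
      ← gammaK_mul_measureReal A γ i j ((measure_mono (hsub k)).trans_lt hXcomp.measure_lt_top).ne]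
    ring
  · rw [sum_integral_Phi_mul_G2First_eq_zero hAdisj hcells hγdiag hMN, mul_zero]

/-- for the inflow part `G₂` of the first-order adoption generator,
`⟨Φ_M, G₂ Φ_N⟩ = γ_{ij}^{(k)} N_i^{(k)} ⟨Φ_N, Φ_N⟩` if `M = N + E_j^{(k)} − E_i^{(k)}`
for some statuses `i ≠ j` and subset index `k`, and `⟨Φ_M, G₂ Φ_N⟩ = 0` otherwise. -/
theorem statement11 (d m n_s n_a : ℕ) (hns : 1 ≤ n_s) (hna : 1 ≤ n_a)
    (Xdom : Set (E d)) (hXcomp : IsCompact Xdom) (hXpos : 0 < volume Xdom)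
    (A : Fin m → Set (E d)) (hAmeas : ∀ k, MeasurableSet (A k))
    (hAdisj : Pairwise (Disjoint on A)) (hApos : ∀ k, 0 < volume (A k))
    (hAcover : (⋃ k, A k) = Xdom)
    (γ : Fin n_s → Fin n_s → E d → ℝ)
    (hγnonneg : ∀ i j x, 0 ≤ γ i j x) (hγdiag : ∀ i x, γ i i x = 0)
    (hγint : ∀ i j, IntegrableOn (γ i j) Xdom)
    (M N : Fin n_s → Fin m → ℤ)
    (hM : M ∈ Mset n_s m n_a) (hN : N ∈ Mset n_s m n_a) :
    (∀ (i j : Fin n_s) (k : Fin m), i ≠ j → M = N + Emat j k - Emat i k →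
      ip Xdom (Phi (n_a := n_a) A M) (G2First γ (Phi A N))
        = gammaK A γ i j k * (N i k : ℝ) * ip Xdom (Phi (n_a := n_a) A N) (Phi A N)) ∧
    ((¬∃ (i j : Fin n_s) (k : Fin m), i ≠ j ∧ M = N + Emat j k - Emat i k) →
      ip Xdom (Phi (n_a := n_a) A M) (G2First γ (Phi A N)) = 0) :=
  statement11_general d m n_s n_a hna Xdom hXcomp A hAmeas hAdisj hAcover γ hγdiag hγint M N

end ABMFormal
end
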